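/- With the setup above (T ⊆ ∏_{g∈N} O a full-rank local complete O-subalgebra, J an ideal with residue images J_g = λ^{m_g} O): if the λ-adic valuation of #(T/J) is strictly less than [F : F_ℓ] · Σ_{g∈N} m_g, where F is the residue field of O and ℓ its residue characteristic, then J is not a principal ideal of T. -/

import Mathlib

/-!
If `J = t T`, then `t` is a non-zero-divisor of `G = ∏_g O`, and comparing the index of `t T`
in `G` through `T` and through `t G` gives `[T : t T] = [G : t G]`, since `T` has finite index
in `G` (it contains `ϖ^N G`). But `G / t G ≅ ∏_g O / ϖ^{m g}` has `ℓ^{d Σ m g}` elements, so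
`val_ℓ #(T/J)` would be exactly `d Σ m g`.
-/

theorem Ideal.card_quotient_span_pow_of_prime {S : Type*} [CommRing S] [IsDedekindDomain S]
    {p : S} (hp : Prime p) (k : ℕ) :
    Nat.card (S ⧸ Ideal.span {p ^ k}) = Nat.card (S ⧸ Ideal.span {p}) ^ k := by
  have : (Ideal.span {p}).IsPrime := (Ideal.span_singleton_prime hp.ne_zero).mpr hp
  have h := cardQuot_pow_of_prime (S := S) (P := Ideal.span {p})
    (by simpa [Ideal.span_singleton_eq_bot] using hp.ne_zero) (i := k)
  rwa [Ideal.span_singleton_pow, Submodule.cardQuot_apply, Submodule.cardQuot_apply] at h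

theorem Pi.card_quotient_span_singleton {ι : Type*} [Fintype ι] {R : ι → Type*}
    [∀ i, CommRing (R i)] (x : ∀ i, R i) :
    Nat.card ((∀ i, R i) ⧸ Ideal.span {x}) = ∏ i, Nat.card (R i ⧸ Ideal.span {x i}) := by
  let f : (∀ i, R i) →+* ∀ i, R i ⧸ Ideal.span {x i} :=
    RingHom.pi fun i => (Ideal.Quotient.mk _).comp (Pi.evalRingHom R i)
  have hf : Function.Surjective f := fun y =>
    ⟨fun i => (Ideal.Quotient.mk_surjective (y i)).choose,
      funext fun i => (Ideal.Quotient.mk_surjective (y i)).choose_spec⟩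
  have hker : RingHom.ker f = Ideal.span {x} := by
    ext y
    have hy : y ∈ RingHom.ker f ↔ ∀ i, x i ∣ y i := by
      simp only [RingHom.mem_ker, funext_iff, Pi.zero_apply, ← Ideal.Quotient.eq_zero_iff_dvd]
      rfl
    rw [hy, Ideal.mem_span_singleton]
    exact ⟨fun h => ⟨fun i => (h i).choose, funext fun i => (h i).choose_spec⟩,
      fun ⟨c, hc⟩ i => ⟨c i, congrFun hc i⟩⟩
  rw [← hker, Nat.card_congr (RingHom.quotientKerEquivOfSurjective hf).toEquiv, Nat.card_pi]

theorem Submodule.exists_pow_smul_mem_of_forall_exists {R M : Type*} [CommSemiring R]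
    [AddCommMonoid M] [Module R M] [Module.Finite R M] (N : Submodule R M) (ϖ : R)
    (h : ∀ x, ∃ n, ϖ ^ n • x ∈ N) : ∃ n, ∀ x, ϖ ^ n • x ∈ N := by
  classical
  obtain ⟨s, hs⟩ := Module.Finite.fg_top (R := R) (M := M)
  choose n hn using h
  refine ⟨s.sup n, fun x => ?_⟩
  suffices ⊤ ≤ N.comap (DistribSMul.toLinearMap R M (ϖ ^ s.sup n)) from this trivial
  rw [← hs, Submodule.span_le]
  intro y hy
  have hle : n y ≤ s.sup n := Finset.le_sup hy
  show ϖ ^ s.sup n • y ∈ N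
  rw [← Nat.sub_add_cancel hle, pow_add, mul_smul]
  exact N.smul_mem _ (hn y)

theorem Submodule.index_ne_zero_of_forall_pow_smul_mem {ι R : Type*} [Fintype ι] [CommRing R]
    (S : Submodule R (ι → R)) {ϖ : R} (hϖ : ∀ n, Nat.card (R ⧸ Ideal.span {ϖ ^ n}) ≠ 0)
    (h : ∀ x, ∃ n, ϖ ^ n • x ∈ S) : S.toAddSubgroup.index ≠ 0 := by
  obtain ⟨n, hn⟩ := S.exists_pow_smul_mem_of_forall_exists ϖ h
  have hle : (Ideal.span {fun _ : ι => ϖ ^ n}).toAddSubgroup ≤ S.toAddSubgroup := by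
    intro x hx
    obtain ⟨y, rfl⟩ := Ideal.mem_span_singleton'.mp hx
    change _ ∈ S
    convert hn y using 1
    ext
    simp [mul_comm]
  intro h0
  have hdvd := AddSubgroup.index_dvd_of_le hle
  rw [h0, zero_dvd_iff] at hdvd
  change Nat.card ((ι → R) ⧸ Ideal.span {fun _ : ι => ϖ ^ n}) = 0 at hdvd
  rw [Pi.card_quotient_span_singleton, Finset.prod_eq_zero_iff] at hdvd
  obtain ⟨i, -, hi⟩ := hdvd
  exact hϖ n hi

theorem RingHom.card_quotient_span_singleton_of_injective {S R : Type*} [CommRing S]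
    [CommRing R] {f : S →+* R} (hf : Function.Injective f)
    (hindex : f.range.toAddSubgroup.index ≠ 0) {t : S} (ht : IsLeftRegular (f t)) :
    Nat.card (S ⧸ Ideal.span {t}) = Nat.card (R ⧸ Ideal.span {f t}) := by
  let μ : R →+ R := AddMonoidHom.mulLeft (f t)
  have hμ_range : μ.range = (Ideal.span {f t}).toAddSubgroup := by
    ext x
    simp [μ, Ideal.mem_span_singleton', mul_comm]
  have hf_range : f.toAddMonoidHom.range = f.range.toAddSubgroup := rfl
  have himage : (Ideal.span {t}).toAddSubgroup.map f.toAddMonoidHom =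
      f.range.toAddSubgroup.map μ := by
    ext x
    simp [μ, Ideal.mem_span_singleton', mul_comm]
  have h1 := AddSubgroup.index_map_of_injective (f := f.toAddMonoidHom)
    (Ideal.span {t}).toAddSubgroup hf
  have h2 := AddSubgroup.index_map_of_injective (f := μ) f.range.toAddSubgroup ht
  rw [himage, h2, hμ_range, hf_range, mul_comm] at h1
  exact (Nat.eq_of_mul_eq_mul_right (Nat.pos_of_ne_zero hindex) h1).symm

theorem stmt8_general (O : Type*) [CommRing O] [IsDomain O] [IsDiscreteValuationRing O]
    (ϖ : O) (hϖ : Irreducible ϖ)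
    (ℓ d : ℕ) (hℓ : ℓ.Prime)
    (hcard : Nat.card (O ⧸ Ideal.span {ϖ}) = ℓ ^ d)
    (ι : Type*) [Fintype ι]
    (T : Subalgebra O (ι → O))
    (hfull : ∀ x : ι → O, ∃ n : ℕ, ϖ ^ n • x ∈ T)
    (J : Ideal T)
    (m : ι → ℕ)
    (hJg : ∀ g : ι,
      Ideal.map ((Pi.evalRingHom (fun _ : ι => O) g).comp T.val.toRingHom) J
        = Ideal.span {ϖ ^ m g})
    (hval : padicValNat ℓ (Nat.card (T ⧸ J)) < d * ∑ g : ι, m g) :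
    ¬ ∃ t : T, J = Ideal.span {t} := by
  rintro ⟨t, rfl⟩
  have hcard_pow (k : ℕ) : Nat.card (O ⧸ Ideal.span {ϖ ^ k}) = ℓ ^ (d * k) := by
    rw [Ideal.card_quotient_span_pow_of_prime hϖ.prime, hcard, pow_mul]
  have hspan (g : ι) : Ideal.span {(t : ι → O) g} = Ideal.span {ϖ ^ m g} := by
    simpa [Ideal.map_span] using hJg g
  have hreg : IsLeftRegular (t : ι → O) := Pi.isLeftRegular_iff.mpr fun g =>
    (IsRegular.of_ne_zero fun h0 => pow_ne_zero (m g) hϖ.ne_zero <|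
      Ideal.span_singleton_eq_bot.mp (by simp [← hspan g, h0])).left
  have hrange :
      T.val.toRingHom.range.toAddSubgroup = (Subalgebra.toSubmodule T).toAddSubgroup := by
    ext x
    simp
  have hindex : T.val.toRingHom.range.toAddSubgroup.index ≠ 0 := by
    rw [hrange]
    exact (Subalgebra.toSubmodule T).index_ne_zero_of_forall_pow_smul_mem
      (fun n => by simp [hcard_pow, hℓ.ne_zero]) hfull
  rw [RingHom.card_quotient_span_singleton_of_injective Subtype.val_injective hindex hreg,
    Pi.card_quotient_span_singleton] at hval
  simp only [AlgHom.toRingHom_eq_coe, RingHom.coe_coe, Subalgebra.coe_val, hspan, hcard_pow,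
    Finset.prod_pow_eq_pow_sum, ← Finset.mul_sum, padicValNat.prime_pow (hp := ⟨hℓ⟩)] at hval
  exact lt_irrefl _ hval

/-- Same setup as the principality criterion: `O` a complete DVR with uniformizer `ϖ`,
residue field of cardinality `ℓ^d` (`ℓ` the residue characteristic, `d = [F : F_ℓ]`),
`T ⊆ ∏_{g ∈ ι} O` a full-rank local complete `O`-subalgebra, `J` an ideal with residue
images `ϖ^{m g} O`.  If `val_ℓ(#(T/J)) < d · Σ_g m g`, then `J` is not principal. -/
theorem stmt8 (O : Type*) [CommRing O] [IsDomain O] [IsDiscreteValuationRing O]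
    [IsAdicComplete (IsLocalRing.maximalIdeal O) O]
    (ϖ : O) (hϖ : Irreducible ϖ) [Finite (O ⧸ Ideal.span {ϖ})]
    (ℓ d : ℕ) (hℓ : ℓ.Prime) (hd : 0 < d)
    (hcard : Nat.card (O ⧸ Ideal.span {ϖ}) = ℓ ^ d)
    (ι : Type*) [Fintype ι] [Nonempty ι]
    (T : Subalgebra O (ι → O)) [IsLocalRing T]
    (hfull : ∀ x : ι → O, ∃ n : ℕ, ϖ ^ n • x ∈ T)
    (J : Ideal T) (hfin : Finite (T ⧸ J))
    (m : ι → ℕ) (hm : ∀ g, 0 < m g)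
    (hTg : ∀ g : ι, Function.Surjective ((Pi.evalRingHom (fun _ : ι => O) g).comp T.val.toRingHom))
    (hJg : ∀ g : ι,
      Ideal.map ((Pi.evalRingHom (fun _ : ι => O) g).comp T.val.toRingHom) J
        = Ideal.span {ϖ ^ m g})
    (hval : padicValNat ℓ (Nat.card (T ⧸ J)) < d * ∑ g : ι, m g) :
    ¬ ∃ t : T, J = Ideal.span {t} :=
  stmt8_general O ϖ hϖ ℓ d hℓ hcard ι T hfull J m hJg hval
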